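/- Consider N jointly Gaussian mean-zero outputs with covariance built from Q latent white-noise functions via kernels K_{qi}, i.e., cov_{ij}(t) = ∑_{q=1}^Q ∫ K_{qi}(u) K_{qj}(u − t) du, where each K_{qi} is of the form α_{qi} k_{qi} with k_{qi} > 0 integrable. Suppose the index set {1,…,N} is partitioned into M nonempty classes and we require cov_{ij} ≡ 0 whenever i, j lie in different classes while each cov_{ii} is not identically zero. Then necessarily Q ≥ M. -/

import Mathlib

/-!
Integrating the cross-covariance of outputs `i` and `j` over the shift turns it, by Fubini, into
`∑ q, w q i * w q j` with `w q i = α q i * ∫ k q i`. Vanishing across classes makes the vectors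
`w · i` of class representatives pairwise orthogonal in `ℝ^Q`, and a nondegenerate `cov i i`
forces some `α q i ≠ 0`, hence `w · i ≠ 0` since `∫ k q i > 0`. Nonzero orthogonal vectors are
linearly independent, so there are at most `Q` classes.
-/

open MeasureTheory
open scoped Convolution

section CrossCorrelation

variable {G : Type*} [MeasurableSpace G] [AddCommGroup G] {μ : Measure G}

theorem integral_mul_sub_eq_convolution (f g : G → ℝ) :
    (fun t => ∫ u, f u * g (u - t) ∂μ)
      = f ⋆[ContinuousLinearMap.mul ℝ ℝ, μ] fun x => g (-x) := by
  ext t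
  simp only [convolution_def, ContinuousLinearMap.mul_apply', neg_sub]

variable [MeasurableAdd₂ G] [MeasurableNeg G] [SFinite μ] [μ.IsAddRightInvariant]
  [μ.IsNegInvariant] {f g : G → ℝ}

theorem integrable_integral_mul_sub (hf : Integrable f μ) (hg : Integrable g μ) :
    Integrable (fun t => ∫ u, f u * g (u - t) ∂μ) μ := by
  rw [integral_mul_sub_eq_convolution]
  exact hf.integrable_convolution _ hg.comp_neg

theorem integral_integral_mul_sub (hf : Integrable f μ) (hg : Integrable g μ) :
    ∫ t, ∫ u, f u * g (u - t) ∂μ ∂μ = (∫ u, f u ∂μ) * ∫ u, g u ∂μ := by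
  rw [integral_mul_sub_eq_convolution, integral_convolution _ hf hg.comp_neg,
    ContinuousLinearMap.mul_apply', integral_neg_eq_self]

theorem integral_sum_integral_mul_sub {ι : Type*} (s : Finset ι) {f g : ι → G → ℝ}
    (hf : ∀ q, Integrable (f q) μ) (hg : ∀ q, Integrable (g q) μ) :
    ∫ t, ∑ q ∈ s, ∫ u, f q u * g q (u - t) ∂μ ∂μ
      = ∑ q ∈ s, (∫ u, f q u ∂μ) * ∫ u, g q u ∂μ := by
  rw [integral_finsetSum s fun q _ => integrable_integral_mul_sub (hf q) (hg q)]
  exact Finset.sum_congr rfl fun q _ => integral_integral_mul_sub (hf q) (hg q)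

end CrossCorrelation

theorem integral_pos_of_forall_pos {α : Type*} [MeasurableSpace α] {μ : Measure α} [NeZero μ]
    {f : α → ℝ} (hpos : ∀ x, 0 < f x) (hf : Integrable f μ) : 0 < ∫ x, f x ∂μ := by
  rw [integral_pos_iff_support_of_nonneg (fun x => (hpos x).le) hf,
    Function.support_eq_univ fun x => (hpos x).ne']
  exact Measure.measure_univ_pos.2 (NeZero.ne μ)

theorem card_le_of_pairwise_dotProduct_eq_zero {ι κ : Type*} [Fintype ι] [Fintype κ]
    {w : ι → κ → ℝ} (hw : ∀ i, w i ≠ 0) (horth : Pairwise fun i j => w i ⬝ᵥ w j = 0) :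
    Fintype.card ι ≤ Fintype.card κ := by
  have hli : LinearIndependent ℝ fun i => WithLp.toLp 2 (w i) :=
    linearIndependent_of_ne_zero_of_inner_eq_zero (𝕜 := ℝ) (by simpa using hw) fun i j hij => by
      simpa [EuclideanSpace.inner_eq_star_dotProduct, dotProduct_comm] using horth hij
  simpa using hli.fintype_card_le_finrank

theorem latent_functions_necessary_general {N M Q : ℕ}
    (k : Fin Q → Fin N → ℝ → ℝ) (α : Fin Q → Fin N → ℝ)
    (hkpos : ∀ q i x, 0 < k q i x)
    (hkint : ∀ q i, Integrable (k q i))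
    (c : Fin N → Fin M) (hc : Function.Surjective c)
    (hcross : ∀ i j, c i ≠ c j → ∀ t : ℝ,
      (∑ q, ∫ u, (α q i * k q i u) * (α q j * k q j (u - t))) = 0)
    (hdiag : ∀ i, ¬ (∀ t : ℝ,
      (∑ q, ∫ u, (α q i * k q i u) * (α q i * k q i (u - t))) = 0)) :
    M ≤ Q := by
  set rep := Function.surjInv hc
  set w : Fin M → Fin Q → ℝ := fun m q => ∫ u, α q (rep m) * k q (rep m) u
  have hw : ∀ m, w m ≠ 0 := by
    intro m hm
    obtain ⟨q, hq⟩ : ∃ q, α q (rep m) ≠ 0 := by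
      by_contra! h
      exact hdiag (rep m) fun t => Finset.sum_eq_zero fun q _ => by simp [h q]
    have hwq : α q (rep m) * ∫ u, k q (rep m) u = 0 := by
      simpa [w, integral_const_mul] using congrFun hm q
    exact mul_ne_zero hq (integral_pos_of_forall_pos (hkpos q (rep m)) (hkint q (rep m))).ne' hwq
  have horth : Pairwise fun m m' => w m ⬝ᵥ w m' = 0 := by
    intro m m' hmm'
    have hcls : c (rep m) ≠ c (rep m') := by simpa [rep, Function.surjInv_eq] using hmm'
    rw [dotProduct, ← integral_sum_integral_mul_sub _ (fun q => (hkint q (rep m)).const_mul _)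
      fun q => (hkint q (rep m')).const_mul _]
    simp [hcross _ _ hcls]
  simpa using card_le_of_pairwise_dotProduct_eq_zero hw horth

/-- Theorem 1 (necessity): in the convolution construction with kernels
K_{qi} = α_{qi} k_{qi}, k_{qi} > 0 integrable, if the outputs split into M classes
(given by a surjection c : Fin N → Fin M) with identically zero cross-covariance
between different classes and non-degenerate own covariances, then Q ≥ M. -/
theorem latent_functions_necessary {N M Q : ℕ}
    (k : Fin Q → Fin N → ℝ → ℝ) (α : Fin Q → Fin N → ℝ)
    (hkpos : ∀ q i x, 0 < k q i x)
    (hkint : ∀ q i, Integrable (k q i))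
    (hconv : ∀ q i j (t : ℝ), Integrable (fun u => k q i u * k q j (u - t)))
    (c : Fin N → Fin M) (hc : Function.Surjective c)
    (hcross : ∀ i j, c i ≠ c j → ∀ t : ℝ,
      (∑ q, ∫ u, (α q i * k q i u) * (α q j * k q j (u - t))) = 0)
    (hdiag : ∀ i, ¬ (∀ t : ℝ,
      (∑ q, ∫ u, (α q i * k q i u) * (α q i * k q i (u - t))) = 0)) :
    M ≤ Q :=
  latent_functions_necessary_general k α hkpos hkint c hc hcross hdiag
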